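/- arXiv:1704.06375 — 4 statements merged into one kernel-verified Lean document; each statement's English description precedes it below -/
import Mathlib

section
/- For a linear code C of length n over R = F_q + uF_q (q = p^{2m}, p^m ≡ 1 mod 4), the Gray image of its Hermitian dual equals the Hermitian dual of its Gray image: Φ(C^{⊥_H}) = Φ(C)^{⊥_H}. -/
/-!
The Hermitian form on `F_q^(2n)` pulled back along `Φ` is `fst + snd` of the Hermitian form on
`R^n`: this uses that Frobenius `t ↦ t^(p^m)` is additive and fixes `α`, the latter because `α`
is a fourth root of unity and `p^m ≡ 1 mod 4`. So `Φ` maps `C^{⊥_H}` into `Φ(C)^{⊥_H}`.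
Conversely, if `Φ x` is orthogonal to `Φ(C)`, then testing against both `c` and `u c` (which
lies in `C` by linearity) kills `fst` and `snd` separately, since `[x, u c]_H = u [x, c]_H`.
Finally `Φ` is surjective because `α` is a unit.
-/

open TrivSqZeroExt

/-- The Gray map `Φ : R^n → F_q^(2n)`. -/
noncomputable def grayMap {F : Type*} [CommRing F] (α : F) (n : ℕ)
    (x : Fin n → DualNumber F) : Fin n × Fin 2 → F :=
  fun j => if j.2 = 0 then α * (x j.1).snd else (x j.1).fst + (x j.1).snd

/-- Conjugation `(a + ub)‾ = a^(p^m) + u b^(p^m)` on `R = F_q + uF_q`. -/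
noncomputable def dnConj {F : Type*} [CommRing F] (p m : ℕ) (z : DualNumber F) :
    DualNumber F :=
  TrivSqZeroExt.inl (z.fst ^ p ^ m) + TrivSqZeroExt.inr (z.snd ^ p ^ m)

/-- The Hermitian dual of a set of words of length `n` over `R`. -/
def hermDualR {F : Type*} [CommRing F] (p m n : ℕ)
    (S : Set (Fin n → DualNumber F)) : Set (Fin n → DualNumber F) :=
  {x | ∀ c ∈ S, ∑ i, x i * dnConj p m (c i) = 0}

/-- The Hermitian dual of a set of words of length `2n` over `F_q`. -/
def hermDualF {F : Type*} [CommRing F] (p m n : ℕ)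
    (S : Set (Fin n × Fin 2 → F)) : Set (Fin n × Fin 2 → F) :=
  {y | ∀ c ∈ S, ∑ j, y j * (c j) ^ p ^ m = 0}

open DualNumber

section Conjugation

variable {F : Type*} [CommRing F] (p m : ℕ)

@[simp]
lemma fst_dnConj (z : DualNumber F) : (dnConj p m z).fst = z.fst ^ p ^ m := by
  simp [dnConj]

@[simp]
lemma snd_dnConj (z : DualNumber F) : (dnConj p m z).snd = z.snd ^ p ^ m := by
  simp [dnConj]

lemma dnConj_eps_mul {p : ℕ} (hp : p ≠ 0) (z : DualNumber F) :
    dnConj p m (ε * z) = ε * dnConj p m z := by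
  ext <;> simp [zero_pow (pow_ne_zero m hp)]

lemma sum_mul_dnConj_eps_smul {p : ℕ} (hp : p ≠ 0) {n : ℕ} (x c : Fin n → DualNumber F) :
    ∑ i, x i * dnConj p m (((ε : DualNumber F) • c) i) = ε * ∑ i, x i * dnConj p m (c i) := by
  simp only [Pi.smul_apply, smul_eq_mul, dnConj_eps_mul m hp, Finset.mul_sum, mul_left_comm]

end Conjugation

lemma pow_eq_self_of_sq_eq_neg_one {R : Type*} [Ring R] {α : R} (hα : α ^ 2 = -1) {q : ℕ}
    (hq : q % 4 = 1) : α ^ q = α := by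
  have h4 : α ^ 4 = 1 := by
    rw [show 4 = 2 * 2 from rfl, pow_mul, hα, neg_one_sq]
  rw [← Nat.div_add_mod q 4, hq, pow_succ, pow_mul, h4, one_pow, one_mul]

section GrayMap

variable {F : Type*} [CommRing F] {α : F} {n : ℕ}

lemma grayMap_surjective (hα : α ^ 2 = -1) : Function.Surjective (grayMap α n) := by
  intro y
  refine ⟨fun i => (y (i, 1) + α * y (i, 0), -(α * y (i, 0))), funext fun ⟨i, k⟩ => ?_⟩
  fin_cases k
  · simp only [grayMap, Fin.zero_eta, Fin.isValue, ↓reduceIte, snd_mk, mul_neg]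
    linear_combination -y (i, 0) * hα
  · simp [grayMap]

lemma sum_grayMap_mul_pow_eq (p m : ℕ) [ExpChar F p] (hα : α ^ 2 = -1)
    (hαq : α ^ p ^ m = α) (x c : Fin n → DualNumber F) :
    ∑ j, grayMap α n x j * grayMap α n c j ^ p ^ m =
      (∑ i, x i * dnConj p m (c i)).fst + (∑ i, x i * dnConj p m (c i)).snd := by
  rw [fst_sum, snd_sum, ← Finset.sum_add_distrib, Fintype.sum_prod_type]
  refine Finset.sum_congr rfl fun i _ => ?_
  simp only [Fin.sum_univ_two, grayMap, fst_mul, DualNumber.snd_mul, fst_dnConj, snd_dnConj,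
    Fin.isValue, if_true, one_ne_zero, if_false, mul_pow, hαq, add_pow_expChar_pow]
  linear_combination (x i).snd * (c i).snd ^ p ^ m * hα

lemma grayMap_mem_hermDualF_iff (p m : ℕ) [ExpChar F p] (hα : α ^ 2 = -1)
    (hαq : α ^ p ^ m = α) (C : Submodule (DualNumber F) (Fin n → DualNumber F))
    (x : Fin n → DualNumber F) :
    grayMap α n x ∈ hermDualF p m n (grayMap α n '' C) ↔ x ∈ hermDualR p m n C := by
  simp only [hermDualF, hermDualR, Set.mem_ofPred_eq, Set.forall_mem_image,
    sum_grayMap_mul_pow_eq p m hα hαq, SetLike.mem_coe]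
  refine ⟨fun h c hc => ?_, fun h c hc => by simp [h c hc]⟩
  have hfst := h (C.smul_mem ε hc)
  simp only [sum_mul_dnConj_eps_smul m (expChar_ne_zero F p), fst_mul, DualNumber.snd_mul, fst_eps, snd_eps,
    zero_mul, one_mul, zero_add] at hfst
  have hsnd := h hc
  rw [hfst, zero_add] at hsnd
  exact TrivSqZeroExt.ext hfst hsnd

end GrayMap

theorem stmt6_general (p m n : ℕ) [Fact p.Prime]
    (F : Type*) [Field F] [Fintype F] (hF : Fintype.card F = p ^ (2 * m))
    (hpm : p ^ m % 4 = 1) (α : F) (hα : α ^ 2 = -1)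
    (C : Submodule (DualNumber F) (Fin n → DualNumber F)) :
    grayMap α n '' hermDualR p m n (C : Set (Fin n → DualNumber F)) =
      hermDualF p m n (grayMap α n '' (C : Set (Fin n → DualNumber F))) := by
  have : CharP F p := charP_of_card_eq_prime_pow hF
  have hαq : α ^ p ^ m = α := pow_eq_self_of_sq_eq_neg_one hα hpm
  have hdual : hermDualR p m n C = grayMap α n ⁻¹' hermDualF p m n (grayMap α n '' C) :=
    Set.ext fun x => (grayMap_mem_hermDualF_iff p m hα hαq C x).symm
  rw [hdual, Set.image_preimage_eq _ (grayMap_surjective hα)]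

/-- For a linear code `C` of length `n` over `R = F_q + uF_q`,
`Φ(C^{⊥_H}) = Φ(C)^{⊥_H}`. -/
theorem stmt6 (p m n : ℕ) [Fact p.Prime] (hm : 1 ≤ m)
    (F : Type*) [Field F] [Fintype F] (hF : Fintype.card F = p ^ (2 * m))
    (hpm : p ^ m % 4 = 1) (α : F) (hα : α ^ 2 = -1)
    (C : Submodule (DualNumber F) (Fin n → DualNumber F)) :
    grayMap α n '' hermDualR p m n (C : Set (Fin n → DualNumber F)) =
      hermDualF p m n (grayMap α n '' (C : Set (Fin n → DualNumber F))) :=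
  stmt6_general p m n F hF hpm α hα C
end

section
/- For a linear code C of length n over a finite chain ring R (a finite Frobenius ring), |C| · |C^{⊥_H}| = |R|^n, where the Hermitian dual is taken with respect to a ring involution. -/
/-!
A finite chain ring `R` has a primitive additive character `χ`: any character that is nontrivial
on a nonzero element of the minimal ideal, since every nonzero principal ideal contains that ideal.
Then `x ↦ (y ↦ χ (x ⬝ᵥ y))` identifies `Rⁿ` with its character group, and, because a code is
closed under scalars, it maps the Euclidean dual of a code `D` onto the characters trivial on `D`.
There are `|Rⁿ / D|` of those, so `|D| · |D^⊥| = |R|ⁿ` by Lagrange. Finally, applying the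
inverse of the involution coordinatewise is a bijection from the Hermitian dual of `C` onto its
Euclidean dual.
-/

open Matrix

theorem Ideal.le_span_singleton_of_isAtom {R : Type*} [CommRing R]
    (hchain : ∀ I J : Ideal R, I ≤ J ∨ J ≤ I) {I : Ideal R} (hI : IsAtom I) {a : R}
    (ha : a ≠ 0) : I ≤ Ideal.span {a} :=
  (hchain I _).elim id fun h =>
    ((hI.le_iff.1 h).resolve_left (by simpa [Ideal.span_singleton_eq_bot] using ha)).ge

namespace AddChar

theorem exists_isPrimitive_of_ideal_chain {R : Type*} [CommRing R] [Finite R]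
    (hchain : ∀ I J : Ideal R, I ≤ J ∨ J ≤ I) : ∃ χ : AddChar R ℂ, χ.IsPrimitive := by
  obtain hbot | ⟨I, hI, -⟩ := eq_bot_or_exists_atom_le (⊤ : Ideal R)
  · -- `R` is the zero ring, where primitivity is vacuous.
    refine ⟨1, fun a ha => (ha ?_).elim⟩
    simpa [hbot] using (Submodule.mem_top : a ∈ (⊤ : Ideal R))
  · obtain ⟨s, hsI, hs0⟩ := Submodule.exists_mem_ne_zero_of_ne_bot hI.1
    obtain ⟨χ, hχ⟩ := AddChar.exists_apply_ne_zero.2 hs0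
    refine ⟨χ, fun a ha h => hχ ?_⟩
    obtain ⟨b, rfl⟩ :=
      Ideal.mem_span_singleton'.1 (Ideal.le_span_singleton_of_isAtom hchain hI ha hsI)
    simpa [mul_comm] using DFunLike.congr_fun h b

theorem card_eq_one_on_eq_card_quotient {G : Type*} [AddCommGroup G] [Finite G]
    (D : AddSubgroup G) :
    Nat.card {ψ : AddChar G ℂ // ∀ d ∈ D, ψ d = 1} = Nat.card (G ⧸ D) := by
  have := Fintype.ofFinite (G ⧸ D)
  rw [Nat.card_eq_fintype_card (α := G ⧸ D), ← AddChar.card_eq, ← Nat.card_eq_fintype_card]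
  symm
  refine Nat.card_eq_of_bijective (fun φ => ⟨φ.compAddMonoidHom (QuotientAddGroup.mk' D),
    fun d hd => by simp [(QuotientAddGroup.eq_zero_iff d).2 hd]⟩) ⟨fun φ φ' h => ?_, ?_⟩
  · exact compAddMonoidHom_injective_left _ (QuotientAddGroup.mk'_surjective D)
      (congrArg Subtype.val h)
  · rintro ⟨ψ, hψ⟩
    refine ⟨toAddMonoidHomEquiv.symm (QuotientAddGroup.lift D ψ.toAddMonoidHom
      fun d hd => by simp [hψ d hd]), ?_⟩
    ext x
    simp

variable {R ι : Type*} [CommRing R] [Fintype ι] {χ : AddChar R ℂ}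

def dotProductChar (χ : AddChar R ℂ) (x : ι → R) : AddChar (ι → R) ℂ where
  toFun y := χ (x ⬝ᵥ y)
  map_zero_eq_one' := by simp
  map_add_eq_mul' y z := by simp [dotProduct_add, map_add_eq_mul]

@[simp]
theorem dotProductChar_apply (x y : ι → R) : dotProductChar χ x y = χ (x ⬝ᵥ y) := rfl

theorem dotProductChar_injective (hχ : χ.IsPrimitive) :
    Function.Injective (dotProductChar χ : (ι → R) → AddChar (ι → R) ℂ) := by
  classical
  intro x y h
  funext i
  refine to_mulShift_inj_of_isPrimitive hχ (ext _ _ fun a => ?_)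
  simpa [dotProduct_single] using DFunLike.congr_fun h (Pi.single i a)

theorem dotProductChar_bijective [Finite R] (hχ : χ.IsPrimitive) :
    Function.Bijective (dotProductChar χ : (ι → R) → AddChar (ι → R) ℂ) := by
  classical
  have := Fintype.ofFinite R
  exact (Fintype.bijective_iff_injective_and_card _).2
    ⟨dotProductChar_injective hχ, AddChar.card_eq.symm⟩

theorem dotProductChar_eq_one_on_iff (hχ : χ.IsPrimitive) (D : Submodule R (ι → R))
    (x : ι → R) : (∀ d ∈ D, dotProductChar χ x d = 1) ↔ ∀ d ∈ D, x ⬝ᵥ d = 0 := by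
  refine ⟨fun h d hd => ?_, fun h d hd => by simp [h d hd]⟩
  by_contra hne
  obtain ⟨a, ha⟩ := ne_one_iff.1 (hχ hne)
  exact ha (by simpa [dotProduct_smul, mul_comm] using h (a • d) (D.smul_mem a hd))

end AddChar

theorem Submodule.card_mul_card_dotProduct_orthogonal {R ι : Type*} [CommRing R] [Finite R]
    [Fintype ι] {χ : AddChar R ℂ} (hχ : χ.IsPrimitive) (D : Submodule R (ι → R)) :
    Nat.card D * Nat.card {x : ι → R // ∀ d ∈ D, x ⬝ᵥ d = 0} = Nat.card R ^ Fintype.card ι := by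
  have e : {x : ι → R // ∀ d ∈ D, x ⬝ᵥ d = 0} ≃ {ψ : AddChar (ι → R) ℂ // ∀ d ∈ D, ψ d = 1} :=
    (Equiv.ofBijective _ (AddChar.dotProductChar_bijective hχ)).subtypeEquiv
      fun x => (AddChar.dotProductChar_eq_one_on_iff hχ D x).symm
  have hdual : Nat.card {x : ι → R // ∀ d ∈ D, x ⬝ᵥ d = 0} =
      Nat.card ((ι → R) ⧸ D.toAddSubgroup) :=
    (Nat.card_congr e).trans (AddChar.card_eq_one_on_eq_card_quotient D.toAddSubgroup)
  rw [hdual, mul_comm, ← Nat.card_eq_fintype_card, ← Nat.card_fun]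
  exact D.toAddSubgroup.card_eq_card_quotient_mul_card_addSubgroup.symm

theorem card_hermitian_orthogonal_eq {R ι : Type*} [CommRing R] [Fintype ι] (σ : R ≃+* R)
    (C : Submodule R (ι → R)) :
    Nat.card {x : ι → R | ∀ c ∈ C, ∑ i, x i * σ (c i) = 0} =
      Nat.card {x : ι → R // ∀ c ∈ C, x ⬝ᵥ c = 0} :=
  Nat.card_congr <| (Equiv.piCongrRight fun _ => σ.symm.toEquiv).subtypeEquiv fun x => by
    refine forall₂_congr fun c _ => ?_
    rw [← map_eq_zero_iff σ.symm σ.symm.injective, map_sum]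
    simp [dotProduct]

theorem stmt9_general (R : Type*) [CommRing R] [Fintype R]
    (hchain : ∀ I J : Ideal R, I ≤ J ∨ J ≤ I)
    (σ : R ≃+* R)
    (n : ℕ) (C : Submodule R (Fin n → R)) :
    Nat.card C *
      Nat.card {x : Fin n → R | ∀ c ∈ C, ∑ i, x i * σ (c i) = 0} =
      (Fintype.card R) ^ n := by
  obtain ⟨χ, hχ⟩ := AddChar.exists_isPrimitive_of_ideal_chain hchain
  rw [card_hermitian_orthogonal_eq, C.card_mul_card_dotProduct_orthogonal hχ,
    Nat.card_eq_fintype_card, Fintype.card_fin]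

/-- For a linear code `C` of length `n` over a finite chain ring `R`,
`|C| · |C^{⊥_H}| = |R|^n`, where the Hermitian dual is taken with respect to a
ring involution. -/
theorem stmt9 (R : Type*) [CommRing R] [Fintype R]
    (hchain : ∀ I J : Ideal R, I ≤ J ∨ J ≤ I)
    (σ : R ≃+* R) (hσ : ∀ r, σ (σ r) = r)
    (n : ℕ) (C : Submodule R (Fin n → R)) :
    Nat.card C *
      Nat.card {x : Fin n → R | ∀ c ∈ C, ∑ i, x i * σ (c i) = 0} =
      (Fintype.card R) ^ n :=
  stmt9_general R hchain σ n C
end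

section
/- Let R be a finite chain ring with maximal ideal (γ) of nilpotency index t, and let C be a self-dual linear code of length n over R. Then for 0 ≤ i ≤ t−1 and 0 ≤ j ≤ t−1−i, the Euclidean dual of the projection of (C : γ^{t−1−i}) to the residue field is contained in the projection of (C : γ^{i+j}); in particular, the projection of (C : γ^{t−1}) contains its own dual. -/
/-!
The ideals of `R` are the `(γ ^ k)` and the annihilator of `γ ^ (t - k)` is `(γ ^ k)`, so `R`
satisfies Baer's criterion and is self-injective. Lift `x ⊥ proj (C : γ^(t-1-i))` to `x'`. The
functional `γ^(t-1) u + γ^i c ↦ x' ⬝ γ^i c` on `γ^(t-1) R^n + γ^i C` is well defined: if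
`γ^i c = γ^(t-1) v` then `c = γ^(t-1-i) e` with `e ≡ v mod γ`, so `x' ⬝ v ∈ (γ)` by hypothesis
and `γ^(t-1)` kills it. Self-injectivity writes this functional as `w ⬝ ·`; then `w ≡ 0 mod γ`
and `x' - w` lifts `x` into `(C⊥ : γ^i) = (C : γ^i) ⊆ (C : γ^(i+j))`.
-/

open IsLocalRing LinearMap

section SelfInjective

variable {R ι P : Type*} [CommRing R] [Fintype ι] [AddCommGroup P] [Module R P]

theorem exists_dotProduct_eq_of_ker_le [Module.Injective R R] (π : P →ₗ[R] ι → R)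
    (ψ : P →ₗ[R] R) (h : ker π ≤ ker ψ) : ∃ w : ι → R, ∀ p, w ⬝ᵥ π p = ψ p := by
  classical
  obtain ⟨Φ, hΦ⟩ := Module.Injective.extension_property R R _ _ ((ker π).liftQ π le_rfl)
    (ker_eq_bot.mp (Submodule.ker_liftQ_eq_bot _ _ _ le_rfl)) ((ker π).liftQ ψ h)
  obtain ⟨w, rfl⟩ := (dotProductEquiv R ι).surjective Φ
  exact ⟨w, fun p => LinearMap.congr_fun hΦ (Submodule.Quotient.mk p)⟩

end SelfInjective

section ChainRing

variable {R : Type*} [CommRing R] [IsLocalRing R] {γ : R} {t : ℕ}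

theorem exists_eq_pow_mul_unit (hγ : maximalIdeal R = Ideal.span {γ}) (htnil : γ ^ t = 0)
    {c : R} (hc : c ≠ 0) : ∃ (l : ℕ) (u : Rˣ), c = γ ^ l * u := by
  classical
  set l := Nat.findGreatest (γ ^ · ∣ c) t
  obtain ⟨v, hv⟩ : γ ^ l ∣ c := Nat.findGreatest_spec (P := (γ ^ · ∣ c)) (Nat.zero_le t) (by simp)
  have hlt : l < t := (Nat.findGreatest_le t).lt_of_ne fun hl =>
    hc (by rw [hv, show l = t from hl, htnil, zero_mul])
  have hv_unit : IsUnit v := by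
    by_contra hv_nonunit
    obtain ⟨w, rfl⟩ := Ideal.mem_span_singleton.mp (hγ ▸ hv_nonunit : v ∈ Ideal.span {γ})
    exact Nat.findGreatest_is_greatest (Nat.lt_succ_self l) hlt ⟨w, by rw [hv, pow_succ, mul_assoc]⟩
  exact ⟨l, hv_unit.unit, hv⟩

theorem pow_dvd_of_pow_sub_mul_eq_zero (hγ : maximalIdeal R = Ideal.span {γ})
    (htnil : γ ^ t = 0) (htnil' : γ ^ (t - 1) ≠ 0) {k : ℕ} (hk : k ≤ t) {c : R}
    (h : γ ^ (t - k) * c = 0) : γ ^ k ∣ c := by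
  rcases eq_or_ne c 0 with rfl | hc
  · exact dvd_zero _
  obtain ⟨l, u, rfl⟩ := exists_eq_pow_mul_unit hγ htnil hc
  have hl : γ ^ (t - k + l) = 0 := by rwa [← mul_assoc, ← pow_add, Units.mul_left_eq_zero] at h
  have hkl : k ≤ l := by
    by_contra! hlk
    exact htnil' (pow_eq_zero_of_le (by omega) hl)
  exact (pow_dvd_pow γ hkl).mul_right _

theorem pow_pred_mul_eq_zero_iff (hγ : maximalIdeal R = Ideal.span {γ})
    (htnil : γ ^ t = 0) (htnil' : γ ^ (t - 1) ≠ 0) {a : R} :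
    γ ^ (t - 1) * a = 0 ↔ residue R a = 0 := by
  have ht : t ≠ 0 := by
    rintro rfl
    exact one_ne_zero (pow_zero γ ▸ htnil)
  rw [residue_eq_zero_iff, hγ, Ideal.mem_span_singleton]
  refine ⟨fun h => pow_one γ ▸ pow_dvd_of_pow_sub_mul_eq_zero hγ htnil htnil' (by omega) h, ?_⟩
  rintro ⟨b, rfl⟩
  rw [← mul_assoc, ← pow_succ, Nat.sub_add_cancel (by omega), htnil, zero_mul]

theorem exists_ideal_eq_span_pow (hγ : maximalIdeal R = Ideal.span {γ}) (htnil : γ ^ t = 0)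
    (I : Ideal R) : ∃ k ≤ t, I = Ideal.span {γ ^ k} := by
  classical
  have htI : γ ^ t ∈ I := htnil ▸ I.zero_mem
  have hex : ∃ k, γ ^ k ∈ I := ⟨t, htI⟩
  refine ⟨Nat.find hex, Nat.find_min' hex htI, le_antisymm (fun c hc => ?_)
    ((Ideal.span_singleton_le_iff_mem I).mpr (Nat.find_spec hex))⟩
  rcases eq_or_ne c 0 with rfl | hc0
  · exact zero_mem _
  obtain ⟨l, u, rfl⟩ := exists_eq_pow_mul_unit hγ htnil hc0
  have hl : γ ^ l ∈ I := (Ideal.mul_unit_mem_iff_mem I u.isUnit).mp hc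
  exact Ideal.mem_span_singleton.mpr ((pow_dvd_pow γ (Nat.find_min' hex hl)).mul_right _)

theorem baer_self (hγ : maximalIdeal R = Ideal.span {γ}) (htnil : γ ^ t = 0)
    (htnil' : γ ^ (t - 1) ≠ 0) : Module.Baer R R := by
  intro I g
  obtain ⟨k, hk, rfl⟩ := exists_ideal_eq_span_pow hγ htnil I
  have hmem := Ideal.mem_span_singleton_self (γ ^ k)
  obtain ⟨d, hd⟩ : γ ^ k ∣ g ⟨γ ^ k, hmem⟩ := by
    refine pow_dvd_of_pow_sub_mul_eq_zero hγ htnil htnil' hk ?_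
    have hann : γ ^ (t - k) • (⟨γ ^ k, hmem⟩ : Ideal.span {γ ^ k}) = 0 :=
      Subtype.ext (by simp [smul_eq_mul, ← pow_add, Nat.sub_add_cancel hk, htnil])
    rw [← smul_eq_mul, ← map_smul, hann, map_zero]
  refine ⟨toSpanSingleton R R d, fun x hx => ?_⟩
  obtain ⟨a, rfl⟩ := Ideal.mem_span_singleton'.mp hx
  have : (⟨a * γ ^ k, hx⟩ : Ideal.span {γ ^ k}) = a • ⟨γ ^ k, hmem⟩ := rfl
  rw [this, map_smul, hd]
  simp [mul_assoc]

variable {ι : Type*}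

theorem exists_eq_pow_smul_of_pow_sub_smul_eq_zero (hγ : maximalIdeal R = Ideal.span {γ})
    (htnil : γ ^ t = 0) (htnil' : γ ^ (t - 1) ≠ 0) {k : ℕ} (hk : k ≤ t) {v : ι → R}
    (h : γ ^ (t - k) • v = 0) : ∃ z : ι → R, v = γ ^ k • z := by
  choose z hz using fun j => pow_dvd_of_pow_sub_mul_eq_zero hγ htnil htnil' hk (congrFun h j)
  exact ⟨z, funext hz⟩

theorem exists_pow_smul_eq_of_pow_smul_eq (hγ : maximalIdeal R = Ideal.span {γ})
    (htnil : γ ^ t = 0) (htnil' : γ ^ (t - 1) ≠ 0) {i : ℕ} (hi : i < t) {c v : ι → R}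
    (h : γ ^ i • c = γ ^ (t - 1) • v) :
    ∃ e : ι → R, c = γ ^ (t - 1 - i) • e ∧ residue R ∘ e = residue R ∘ v := by
  have hpow : γ ^ (t - 1) = γ ^ i * γ ^ (t - 1 - i) := by rw [← pow_add]; congr 1; omega
  obtain ⟨z, hz⟩ := exists_eq_pow_smul_of_pow_sub_smul_eq_zero hγ htnil htnil' (k := t - i)
    (v := c - γ ^ (t - 1 - i) • v) (by omega)
    (by rw [Nat.sub_sub_self hi.le, smul_sub, smul_smul, ← hpow, h, sub_self])
  refine ⟨v + γ • z, ?_, funext fun j => ?_⟩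
  · rw [smul_add, smul_smul, ← pow_succ, show t - 1 - i + 1 = t - i by omega, ← hz,
      add_sub_cancel]
  · have : residue R γ = 0 := (residue_eq_zero_iff γ).mpr (hγ ▸ Ideal.mem_span_singleton_self γ)
    simp [this]

theorem exists_residue_eq_of_dotProduct_residue_eq_zero [Fintype ι]
    (hγ : maximalIdeal R = Ideal.span {γ}) (htnil : γ ^ t = 0) (htnil' : γ ^ (t - 1) ≠ 0)
    (C : Submodule R (ι → R)) {i : ℕ} (hi : i < t) {x : ι → ResidueField R}
    (hx : ∀ e : ι → R, γ ^ (t - 1 - i) • e ∈ C → x ⬝ᵥ (residue R ∘ e) = 0) :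
    ∃ e : ι → R, (∀ c ∈ C, (γ ^ i • e) ⬝ᵥ c = 0) ∧ residue R ∘ e = x := by
  classical
  have : Module.Injective R R := (baer_self hγ htnil htnil').injective
  obtain ⟨x', rfl⟩ := residue_surjective.comp_left x
  let π : (ι → R) × C →ₗ[R] ι → R := (γ ^ (t - 1) • LinearMap.id).coprod (γ ^ i • C.subtype)
  let ψ : (ι → R) × C →ₗ[R] R := LinearMap.coprod 0 (dotProductEquiv R ι x' ∘ₗ (γ ^ i • C.subtype))
  have hker : ker π ≤ ker ψ := by
    rintro ⟨u, c⟩ hp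
    rw [mem_ker] at hp ⊢
    have hc : γ ^ i • (c : ι → R) = γ ^ (t - 1) • -u := by
      rw [smul_neg, eq_neg_iff_add_eq_zero, add_comm]
      exact hp
    obtain ⟨e, hce, he⟩ := exists_pow_smul_eq_of_pow_smul_eq hγ htnil htnil' hi hc
    have hxu : residue R (x' ⬝ᵥ -u) = 0 := by
      rw [RingHom.map_dotProduct, ← he]
      exact hx e (hce ▸ c.2)
    simp only [ψ, coprod_apply, LinearMap.zero_apply, zero_add, comp_apply, LinearMap.smul_apply,
      Submodule.subtype_apply, dotProductEquiv_apply_apply]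
    rw [hc, dotProduct_smul, smul_eq_mul, (pow_pred_mul_eq_zero_iff hγ htnil htnil').mpr hxu]
  obtain ⟨w, hw⟩ := exists_dotProduct_eq_of_ker_le π ψ hker
  have hw_res : ∀ k, residue R (w k) = 0 := by
    intro k
    rw [← pow_pred_mul_eq_zero_iff hγ htnil htnil']
    simpa [π, ψ] using hw (Pi.single k 1, 0)
  have hw_C : ∀ c ∈ C, w ⬝ᵥ (γ ^ i • c) = x' ⬝ᵥ (γ ^ i • c) := fun c hc => by
    simpa [π, ψ] using hw (0, ⟨c, hc⟩)
  refine ⟨x' - w, fun c hc => ?_, ?_⟩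
  · rw [smul_dotProduct, ← dotProduct_smul, sub_dotProduct, hw_C c hc, sub_self]
  · ext k
    simp [hw_res]

theorem dual_residue_colon_subset_residue_colon [Fintype ι]
    (hγ : maximalIdeal R = Ideal.span {γ}) (htnil : γ ^ t = 0) (htnil' : γ ^ (t - 1) ≠ 0)
    {C : Submodule R (ι → R)} (hsd : (C : Set (ι → R)) = {x | ∀ c ∈ C, x ⬝ᵥ c = 0})
    (i j : ℕ) (hi : i < t) :
    {x | ∀ c ∈ (residue R ∘ ·) '' {e | γ ^ (t - 1 - i) • e ∈ C}, x ⬝ᵥ c = 0} ⊆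
      (residue R ∘ ·) '' {e | γ ^ (i + j) • e ∈ C} := by
  intro x hx
  obtain ⟨e, he, rfl⟩ := exists_residue_eq_of_dotProduct_residue_eq_zero hγ htnil htnil' C hi
    fun e he => hx _ ⟨e, he, rfl⟩
  have he : γ ^ i • e ∈ C := by
    rw [← SetLike.mem_coe, hsd]
    exact he
  refine ⟨e, ?_, rfl⟩
  show γ ^ (i + j) • e ∈ C
  rw [add_comm, pow_add, mul_smul]
  exact C.smul_mem _ he

end ChainRing

theorem stmt10_general (R : Type*) [CommRing R] [IsLocalRing R]
    (γ : R) (hγ : IsLocalRing.maximalIdeal R = Ideal.span {γ})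
    (t : ℕ) (ht : 1 ≤ t) (htnil : γ ^ t = 0) (htnil' : γ ^ (t - 1) ≠ 0)
    (n : ℕ) (C : Submodule R (Fin n → R))
    (hsd : (C : Set (Fin n → R)) = {x | ∀ c ∈ C, ∑ i, x i * c i = 0}) :
    -- notation: `proj S` is the image of `S` in `(R/(γ))^n`, `colon r = (C : r)`
    (∀ i j : ℕ, i ≤ t - 1 → j ≤ t - 1 - i →
      {x : Fin n → IsLocalRing.ResidueField R |
          ∀ c ∈ (fun e : Fin n → R => fun k : Fin n => IsLocalRing.residue R (e k)) ''
            {e | (fun k => γ ^ (t - 1 - i) * e k) ∈ C}, ∑ k, x k * c k = 0} ⊆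
        (fun e : Fin n → R => fun k : Fin n => IsLocalRing.residue R (e k)) ''
          {e | (fun k => γ ^ (i + j) * e k) ∈ C}) ∧
    {x : Fin n → IsLocalRing.ResidueField R |
        ∀ c ∈ (fun e : Fin n → R => fun k : Fin n => IsLocalRing.residue R (e k)) ''
          {e | (fun k => γ ^ (t - 1) * e k) ∈ C}, ∑ k, x k * c k = 0} ⊆
      (fun e : Fin n → R => fun k : Fin n => IsLocalRing.residue R (e k)) ''
        {e | (fun k => γ ^ (t - 1) * e k) ∈ C} := by
  refine ⟨fun i j hi _ => dual_residue_colon_subset_residue_colon hγ htnil htnil' hsd i j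
    (by omega), ?_⟩
  have h := dual_residue_colon_subset_residue_colon hγ htnil htnil' hsd 0 (t - 1) (by omega)
  rwa [Nat.sub_zero, zero_add] at h

/-- Let `R` be a finite chain ring with maximal ideal `(γ)` of
nilpotency index `t` and `C` a self-dual code of length `n` over `R`. Then for
`0 ≤ i ≤ t−1` and `0 ≤ j ≤ t−1−i`, the dual of the projection of `(C : γ^(t−1−i))`
to the residue field is contained in the projection of `(C : γ^(i+j))`; in
particular the projection of `(C : γ^(t−1))` contains its own dual. -/
theorem stmt10 (R : Type*) [CommRing R] [IsLocalRing R] [Fintype R]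
    (hchain : ∀ I J : Ideal R, I ≤ J ∨ J ≤ I)
    (γ : R) (hγ : IsLocalRing.maximalIdeal R = Ideal.span {γ})
    (t : ℕ) (ht : 1 ≤ t) (htnil : γ ^ t = 0) (htnil' : γ ^ (t - 1) ≠ 0)
    (n : ℕ) (C : Submodule R (Fin n → R))
    (hsd : (C : Set (Fin n → R)) = {x | ∀ c ∈ C, ∑ i, x i * c i = 0}) :
    -- notation: `proj S` is the image of `S` in `(R/(γ))^n`, `colon r = (C : r)`
    (∀ i j : ℕ, i ≤ t - 1 → j ≤ t - 1 - i →
      {x : Fin n → IsLocalRing.ResidueField R |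
          ∀ c ∈ (fun e : Fin n → R => fun k : Fin n => IsLocalRing.residue R (e k)) ''
            {e | (fun k => γ ^ (t - 1 - i) * e k) ∈ C}, ∑ k, x k * c k = 0} ⊆
        (fun e : Fin n → R => fun k : Fin n => IsLocalRing.residue R (e k)) ''
          {e | (fun k => γ ^ (i + j) * e k) ∈ C}) ∧
    {x : Fin n → IsLocalRing.ResidueField R |
        ∀ c ∈ (fun e : Fin n → R => fun k : Fin n => IsLocalRing.residue R (e k)) ''
          {e | (fun k => γ ^ (t - 1) * e k) ∈ C}, ∑ k, x k * c k = 0} ⊆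
      (fun e : Fin n → R => fun k : Fin n => IsLocalRing.residue R (e k)) ''
        {e | (fun k => γ ^ (t - 1) * e k) ∈ C} :=
  stmt10_general R γ hγ t ht htnil htnil' n C hsd
end

section
/- Let R be a finite chain ring with maximal ideal (γ) of nilpotency index 2 and residue field of characteristic coprime to n. If C = ⟨f(x)h(x), γ f(x)g(x)⟩ is a cyclic code of length n over R with f g h = x^n − 1 (f, g, h monic pairwise coprime), then C is self-dual if and only if f(x) = ε g*(x) and h(x) = ε' h*(x) for some units ε, ε' of R, where f* denotes the reciprocal polynomial. -/
/-!
Reduction modulo `γ` maps `R[X]` onto `k[X]` (`k` the residue field) with square-zero kernel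
`γ R[X]`, and `x^n - 1` is separable over `k` because `char k ∤ n`. Both codes lift to ideals of
`R[X]` containing `x^n - 1`, namely `⟨f h, γ f g⟩` and `⟨g* h*, γ g* f*⟩`. An element `γ a` of
`⟨F H, γ F G⟩` forces `F̄ ∣ ā`, while `γ F` lies in it as soon as `G, H` are coprime. So
`C = C⊥` gives `f̄ ∣ ḡ*` and `ḡ* ∣ f̄`, and comparing `f h` with `g* h*` modulo `γ` gives
`h̄ ∣ h̄*` and `h̄* ∣ h̄`. Coprimality modulo `γ` lifts to `R[X]` because the kernel is
square-zero, so by separability these divisibilities lift, and monic polynomials dividing each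
other up to a unit leading coefficient differ by a unit constant. Conversely, `f = ε g*` and
`h = ε' h*` make the generators of `C⊥` unit multiples of those of `C`.
-/

open Polynomial IsLocalRing

namespace Polynomial

variable {R : Type*} [CommRing R]

theorem reverse_C_mul_of_isUnit {u : R} (hu : IsUnit u) (p : R[X]) :
    (C u * p).reverse = C u * p.reverse := by
  rw [reverse, natDegree_C_mul_of_isUnit hu, reflect_C_mul, reverse]

theorem reverse_reverse_of_coeff_zero_ne_zero {p : R[X]} (hp : p.coeff 0 ≠ 0) :
    p.reverse.reverse = p := by
  rw [reverse, reverse_natDegree, natTrailingDegree_eq_zero.2 (Or.inr hp), Nat.sub_zero,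
    reverse, reflect_reflect]

theorem isUnit_leadingCoeff_reverse [Nontrivial R] {p : R[X]} (hp : IsUnit (p.coeff 0)) :
    IsUnit p.reverse.leadingCoeff := by
  rwa [reverse_leadingCoeff, trailingCoeff_eq_coeff_zero hp.ne_zero]

theorem Monic.reverse_mul [Nontrivial R] {p q : R[X]} (hp : p.Monic) (hq : q.Monic) :
    (p * q).reverse = p.reverse * q.reverse :=
  Polynomial.reverse_mul (by simp [hp.leadingCoeff, hq.leadingCoeff])

theorem reverse_X_pow_sub_one [Nontrivial R] (n : ℕ) :
    ((X : R[X]) ^ n - 1).reverse = 1 - X ^ n := by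
  rw [reverse, ← C_1, natDegree_X_pow_sub_C, C_1, reflect_sub, reflect_monomial,
    revAt_le le_rfl, Nat.sub_self, pow_zero, reflect_one]

theorem isUnit_coeff_zero_of_dvd_X_pow_sub_one {n : ℕ} (hn : n ≠ 0) {p : R[X]}
    (hp : p ∣ X ^ n - 1) : IsUnit (p.coeff 0) := by
  obtain ⟨q, hq⟩ := hp
  have h0 := congrArg (coeff · 0) hq
  rw [coeff_sub, coeff_X_pow, coeff_one_zero, if_neg hn.symm, mul_coeff_zero, zero_sub] at h0
  exact isUnit_of_mul_isUnit_left (h0 ▸ isUnit_one.neg)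

theorem Monic.eq_of_dvd_of_dvd [Nontrivial R] {p q : R[X]} (hp : p.Monic) (hq : q.Monic)
    (hpq : p ∣ q) (hqp : q ∣ p) : p = q := by
  refine eq_of_monic_of_dvd_of_natDegree_le hq hp hqp ?_
  obtain ⟨r, rfl⟩ := hpq
  have hr : r ≠ 0 := by rintro rfl; simp at hq
  rw [hp.natDegree_mul' hr]
  omega

theorem Monic.exists_eq_C_mul_of_dvd_of_dvd [Nontrivial R] {p q : R[X]} (hp : p.Monic)
    (hq : IsUnit q.leadingCoeff) (hpq : p ∣ q) (hqp : q ∣ p) : ∃ u : Rˣ, p = C (u : R) * q := by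
  obtain ⟨u, hu⟩ := hq
  have hq' : (C (↑u⁻¹ : R) * q).Monic :=
    monic_C_mul_of_mul_leadingCoeff_eq_one (by rw [← hu, Units.inv_mul])
  have hq'q : q = C (u : R) * (C (↑u⁻¹ : R) * q) := by
    rw [← mul_assoc, ← C_mul, Units.mul_inv, C_1, one_mul]
  refine ⟨u⁻¹, hp.eq_of_dvd_of_dvd hq' ?_ ?_⟩
  · exact hpq.trans (dvd_mul_left _ _)
  · exact (Dvd.intro_left _ hq'q.symm).trans hqp

end Polynomial

theorem natCast_ne_zero_of_forall_charP_coprime {K : Type*} [Field K] {n : ℕ}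
    (hcop : ∀ q : ℕ, CharP K q → q.Coprime n) : (n : K) ≠ 0 := fun hn =>
  CharP.ringChar_ne_one ((hcop _ (ringChar.charP K)).eq_one_of_dvd (ringChar.dvd hn))

theorem Ideal.span_pair_mk_eq_iff {A : Type*} [CommRing A] {m a b c d : A}
    (hab : m ∈ Ideal.span {a, b}) (hcd : m ∈ Ideal.span {c, d}) :
    Ideal.span {Ideal.Quotient.mk (Ideal.span {m}) a, Ideal.Quotient.mk (Ideal.span {m}) b} =
        Ideal.span {Ideal.Quotient.mk (Ideal.span {m}) c, Ideal.Quotient.mk (Ideal.span {m}) d} ↔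
      Ideal.span {a, b} = Ideal.span {c, d} := by
  simp only [← Set.image_pair, ← Ideal.map_span]
  refine ⟨fun h => ?_, congrArg _⟩
  rw [← Ideal.comap_map_mk (Ideal.span_le.2 (Set.singleton_subset_iff.2 hab)), h,
    Ideal.comap_map_mk (Ideal.span_le.2 (Set.singleton_subset_iff.2 hcd))]

theorem mul_mem_span_of_isCoprime {A : Type*} [CommRing A] (c : A) {F G H : A}
    (hGH : IsCoprime G H) : c * F ∈ Ideal.span {F * H, c * (F * G)} := by
  obtain ⟨a, b, hab⟩ := hGH
  exact Ideal.mem_span_pair.2 ⟨c * b, a, by linear_combination (c * F) * hab⟩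

theorem Ideal.span_pair_mul_left_unit {A : Type*} [CommSemiring A] {u : A} (hu : IsUnit u)
    (x y : A) : Ideal.span {u * x, y} = Ideal.span {x, y} := by
  rw [Ideal.span_insert, Ideal.span_singleton_mul_left_unit hu, ← Ideal.span_insert]

section SquareZeroMaximalIdeal

variable {R : Type*} [CommRing R] [IsLocalRing R] {γ : R}

theorem C_dvd_of_map_residue_eq_zero (hγ : maximalIdeal R = Ideal.span {γ}) {p : R[X]}
    (hp : p.map (residue R) = 0) : C γ ∣ p := by
  have hker : p ∈ RingHom.ker (mapRingHom (residue R)) := hp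
  rwa [ker_mapRingHom, ker_residue, hγ, Ideal.map_span, Set.image_singleton,
    Ideal.mem_span_singleton] at hker

theorem map_residue_eq_zero_of_C_mul_eq_zero (hγ1 : γ ≠ 0) {p : R[X]} (hp : C γ * p = 0) :
    p.map (residue R) = 0 := by
  ext i
  rw [coeff_map, coeff_zero, residue_eq_zero_iff, mem_maximalIdeal, mem_nonunits_iff]
  intro hu
  have hi : γ * p.coeff i = 0 := by simpa using congrArg (coeff · i) hp
  exact hγ1 (hu.mul_left_eq_zero.1 hi)

theorem map_residue_dvd_of_mem_span (hγ : γ ∈ maximalIdeal R) {A B x : R[X]}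
    (hx : x ∈ Ideal.span {A, C γ * B}) : A.map (residue R) ∣ x.map (residue R) := by
  obtain ⟨p, q, rfl⟩ := Ideal.mem_span_pair.1 hx
  have hres : residue R γ = 0 := (residue_eq_zero_iff γ).2 hγ
  exact ⟨p.map (residue R), by simp [hres, mul_comm]⟩

theorem map_residue_dvd_of_C_mul_mem_span (hγ : maximalIdeal R = Ideal.span {γ})
    (hγ1 : γ ≠ 0) {F G H a : R[X]} (hFH : (F * H).map (residue R) ≠ 0)
    (ha : C γ * a ∈ Ideal.span {F * H, C γ * (F * G)}) :
    F.map (residue R) ∣ a.map (residue R) := by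
  obtain ⟨p, q, hpq⟩ := Ideal.mem_span_pair.1 ha
  have hres : residue R γ = 0 := (residue_eq_zero_iff γ).2 (hγ ▸ Ideal.mem_span_singleton_self γ)
  -- the second generator dies modulo `γ`, so `p ≡ 0` and then `γ a = γ F (s H + q G)`
  have hp : p.map (residue R) * (F * H).map (residue R) = 0 := by
    simpa [hres] using congrArg (Polynomial.map (residue R)) hpq
  obtain ⟨s, rfl⟩ := C_dvd_of_map_residue_eq_zero hγ ((mul_eq_zero.1 hp).resolve_right hFH)
  have hγa : C γ * (a - F * (s * H + q * G)) = 0 := by linear_combination -hpq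
  refine ⟨(s * H + q * G).map (residue R), ?_⟩
  rw [← Polynomial.map_mul, ← sub_eq_zero, ← Polynomial.map_sub]
  exact map_residue_eq_zero_of_C_mul_eq_zero hγ1 hγa

theorem isCoprime_of_isCoprime_map_residue (hγ : maximalIdeal R = Ideal.span {γ})
    (hγ2 : γ ^ 2 = 0) {a b : R[X]} (h : IsCoprime (a.map (residue R)) (b.map (residue R))) :
    IsCoprime a b := by
  obtain ⟨u, v, huv⟩ := h
  obtain ⟨u, rfl⟩ := map_surjective _ residue_surjective u
  obtain ⟨v, rfl⟩ := map_surjective _ residue_surjective v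
  obtain ⟨w, hw⟩ := C_dvd_of_map_residue_eq_zero hγ (p := u * a + v * b - 1) (by
    rw [Polynomial.map_sub, Polynomial.map_add, Polynomial.map_mul, Polynomial.map_mul, huv,
      Polynomial.map_one, sub_self])
  have hγγ : C γ * C γ = (0 : R[X]) := by rw [← C_mul, ← sq, hγ2, C_0]
  -- `1 - γ w` inverts `u a + v b = 1 + γ w`
  refine ⟨(1 - C γ * w) * u, (1 - C γ * w) * v, ?_⟩
  linear_combination (1 - C γ * w) * hw - w ^ 2 * hγγ

theorem dvd_of_map_residue_dvd (hγ : maximalIdeal R = Ideal.span {γ}) (hγ2 : γ ^ 2 = 0)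
    {a b c : R[X]} (ha : a ∣ b * c) (hsep : ((b * c).map (residue R)).Separable)
    (hab : a.map (residue R) ∣ b.map (residue R)) : a ∣ b := by
  rw [Polynomial.map_mul] at hsep
  exact (isCoprime_of_isCoprime_map_residue hγ hγ2
    (hsep.isCoprime.of_isCoprime_of_dvd_left hab)).dvd_of_dvd_mul_right ha

theorem exists_eq_C_mul_of_map_residue_dvd_dvd (hγ : maximalIdeal R = Ideal.span {γ})
    (hγ2 : γ ^ 2 = 0) {p q a b M : R[X]} (hp : p.Monic) (hq : IsUnit q.leadingCoeff)
    (hpa : p * a = M) (hqb : q * b = M) (hsep : (M.map (residue R)).Separable)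
    (hpq : p.map (residue R) ∣ q.map (residue R)) (hqp : q.map (residue R) ∣ p.map (residue R)) :
    ∃ u : Rˣ, p = C (u : R) * q := by
  subst hpa
  refine hp.exists_eq_C_mul_of_dvd_of_dvd hq ?_ ?_
  · exact dvd_of_map_residue_dvd hγ hγ2 (hqb ▸ dvd_mul_right p a) (hqb ▸ hsep) hpq
  · exact dvd_of_map_residue_dvd hγ hγ2 (hqb ▸ dvd_mul_right q b) hsep hqp

/- `f', g', h'` stand for the reciprocal polynomials `f*, g*, h*`. -/
theorem exists_eq_C_mul_of_span_eq (hγ : maximalIdeal R = Ideal.span {γ}) (hγ2 : γ ^ 2 = 0)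
    (hγ1 : γ ≠ 0) {f g h f' g' h' M : R[X]} (hf : f.Monic) (hh : h.Monic)
    (hg' : IsUnit g'.leadingCoeff) (hh' : IsUnit h'.leadingCoeff)
    (hM : f * g * h = M) (hM' : g' * h' * f' = -M) (hsep : (M.map (residue R)).Separable)
    (hgh : IsCoprime g h)
    (hJ : Ideal.span {f * h, C γ * (f * g)} = Ideal.span {g' * h', C γ * (g' * f')}) :
    (∃ ε : Rˣ, f = C (ε : R) * g') ∧ ∃ ε' : Rˣ, h = C (ε' : R) * h' := by
  have hM0 := hsep.ne_zero
  have hfh0 : (f * h).map (residue R) ≠ 0 := fun h0 => hM0 <| by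
    rw [← hM, mul_right_comm, Polynomial.map_mul, h0, zero_mul]
  have hg'h'0 : (g' * h').map (residue R) ≠ 0 := fun h0 => hM0 <| by
    rw [← neg_neg M, ← hM', Polynomial.map_neg, Polynomial.map_mul, h0, zero_mul, neg_zero]
  have hf'h' : IsCoprime f' h' := by
    refine isCoprime_of_isCoprime_map_residue hγ hγ2 (Separable.isCoprime ?_)
    refine hsep.of_dvd ⟨-g'.map (residue R), ?_⟩
    rw [← Polynomial.map_mul, ← Polynomial.map_neg, ← Polynomial.map_mul]
    congr 1
    linear_combination hM'
  have hf_g' : f.map (residue R) ∣ g'.map (residue R) :=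
    map_residue_dvd_of_C_mul_mem_span hγ hγ1 hfh0
      (by rw [hJ]; exact mul_mem_span_of_isCoprime (C γ) hf'h')
  have hg'_f : g'.map (residue R) ∣ f.map (residue R) :=
    map_residue_dvd_of_C_mul_mem_span hγ hγ1 hg'h'0
      (by rw [← hJ]; exact mul_mem_span_of_isCoprime (C γ) hgh)
  have hγm : γ ∈ maximalIdeal R := hγ ▸ Ideal.mem_span_singleton_self γ
  have hg'h'_fh := map_residue_dvd_of_mem_span hγm
    (by rw [← hJ]; exact Ideal.subset_span (Set.mem_insert _ _) : f * h ∈ _)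
  have hfh_g'h' := map_residue_dvd_of_mem_span hγm
    (by rw [hJ]; exact Ideal.subset_span (Set.mem_insert _ _) : g' * h' ∈ _)
  simp only [Polynomial.map_mul] at hfh0 hg'h'0 hfh_g'h' hg'h'_fh
  have hh_h' : h.map (residue R) ∣ h'.map (residue R) :=
    (mul_dvd_mul_iff_left (left_ne_zero_of_mul hg'h'0)).1
      ((mul_dvd_mul_right hg'_f _).trans hfh_g'h')
  have hh'_h : h'.map (residue R) ∣ h.map (residue R) :=
    (mul_dvd_mul_iff_left (left_ne_zero_of_mul hfh0)).1
      ((mul_dvd_mul_right hf_g' _).trans hg'h'_fh)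
  exact ⟨exists_eq_C_mul_of_map_residue_dvd_dvd hγ hγ2 hf hg' (a := g * h) (b := -(h' * f'))
      (by rw [← hM, mul_assoc]) (by linear_combination -hM') hsep hf_g' hg'_f,
    exists_eq_C_mul_of_map_residue_dvd_dvd hγ hγ2 hh hh' (a := f * g) (b := -(g' * f'))
      (by rw [← hM, mul_comm]) (by linear_combination -hM') hsep hh_h' hh'_h⟩

end SquareZeroMaximalIdeal

theorem stmt11_general (R : Type*) [CommRing R] [IsLocalRing R]
    (γ : R) (hγ : IsLocalRing.maximalIdeal R = Ideal.span {γ})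
    (hγ2 : γ ^ 2 = 0) (hγ1 : γ ≠ 0)
    (n : ℕ)
    (hcop : ∀ q : ℕ, CharP (IsLocalRing.ResidueField R) q → Nat.Coprime q n)
    (f g h : R[X]) (hf : f.Monic) (hg : g.Monic) (hh : h.Monic)
    (hfgh : f * g * h = X ^ n - 1)
    (hgh : IsCoprime g h) :
    Ideal.span {Ideal.Quotient.mk (Ideal.span {(X : R[X]) ^ n - 1}) (f * h),
        Ideal.Quotient.mk (Ideal.span {(X : R[X]) ^ n - 1}) (C γ * (f * g))} =
      Ideal.span {Ideal.Quotient.mk (Ideal.span {(X : R[X]) ^ n - 1}) (g.reverse * h.reverse),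
        Ideal.Quotient.mk (Ideal.span {(X : R[X]) ^ n - 1})
          (C γ * (g.reverse * f.reverse))} ↔
      (∃ ε : Rˣ, f = C (ε : R) * g.reverse) ∧ (∃ ε' : Rˣ, h = C (ε' : R) * h.reverse) := by
  have hchar : (n : ResidueField R) ≠ 0 := natCast_ne_zero_of_forall_charP_coprime hcop
  have hn : n ≠ 0 := by rintro rfl; exact hchar Nat.cast_zero
  have hsep : (((X : R[X]) ^ n - 1).map (residue R)).Separable := by
    simpa using separable_X_pow_sub_C (1 : ResidueField R) hchar one_ne_zero
  have hrev : g.reverse * h.reverse * f.reverse = -(X ^ n - 1) := by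
    have := congrArg reverse hfgh
    rw [(hf.mul hg).reverse_mul hh, hf.reverse_mul hg, reverse_X_pow_sub_one] at this
    linear_combination this
  have hunit {p : R[X]} (hp : p ∣ X ^ n - 1) : IsUnit p.reverse.leadingCoeff :=
    isUnit_leadingCoeff_reverse (isUnit_coeff_zero_of_dvd_X_pow_sub_one hn hp)
  rw [Ideal.span_pair_mk_eq_iff (Ideal.mem_span_pair.2 ⟨g, 0, by linear_combination hfgh⟩)
    (Ideal.mem_span_pair.2 ⟨-f.reverse, 0, by linear_combination -hrev⟩)]
  refine ⟨exists_eq_C_mul_of_span_eq hγ hγ2 hγ1 hf hh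
    (hunit ⟨f * h, by linear_combination -hfgh⟩) (hunit ⟨f * g, by linear_combination -hfgh⟩)
    hfgh hrev hsep hgh, ?_⟩
  rintro ⟨⟨ε, hε⟩, ⟨ε', hε'⟩⟩
  have hf' : f.reverse = C (ε : R) * g := by
    rw [hε, reverse_C_mul_of_isUnit ε.isUnit, reverse_reverse_of_coeff_zero_ne_zero
      (isUnit_coeff_zero_of_dvd_X_pow_sub_one hn ⟨f * h, by linear_combination -hfgh⟩).ne_zero]
  rw [show f * h = C (ε : R) * C (ε' : R) * (g.reverse * h.reverse) by
      linear_combination h * hε + C (ε : R) * g.reverse * hε',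
    show C γ * (g.reverse * f.reverse) = C γ * (f * g) by
      linear_combination C γ * g.reverse * hf' - C γ * g * hε,
    Ideal.span_pair_mul_left_unit ((ε.isUnit.map C).mul (ε'.isUnit.map C))]

/-- Over a finite chain ring `R` with maximal ideal `(γ)` of
nilpotency index 2 with residue characteristic coprime to `n`, the cyclic code
`C = ⟨f h, γ f g⟩` of length `n` (where `f g h = x^n − 1` with `f, g, h` monic and
pairwise coprime) is self-dual iff `f = ε g*` and `h = ε' h*` for units `ε, ε'`.
Here the dual of `C` is `⟨g* h*, γ g* f*⟩` and `a*` is the reciprocal polynomial. -/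
theorem stmt11 (R : Type*) [CommRing R] [IsLocalRing R] [Fintype R]
    (hchain : ∀ I J : Ideal R, I ≤ J ∨ J ≤ I)
    (γ : R) (hγ : IsLocalRing.maximalIdeal R = Ideal.span {γ})
    (hγ2 : γ ^ 2 = 0) (hγ1 : γ ≠ 0)
    (n : ℕ) (hn : 1 ≤ n)
    (hcop : ∀ q : ℕ, CharP (IsLocalRing.ResidueField R) q → Nat.Coprime q n)
    (f g h : R[X]) (hf : f.Monic) (hg : g.Monic) (hh : h.Monic)
    (hfgh : f * g * h = X ^ n - 1)
    (hfg : IsCoprime f g) (hfh : IsCoprime f h) (hgh : IsCoprime g h) :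
    Ideal.span {Ideal.Quotient.mk (Ideal.span {(X : R[X]) ^ n - 1}) (f * h),
        Ideal.Quotient.mk (Ideal.span {(X : R[X]) ^ n - 1}) (C γ * (f * g))} =
      Ideal.span {Ideal.Quotient.mk (Ideal.span {(X : R[X]) ^ n - 1}) (g.reverse * h.reverse),
        Ideal.Quotient.mk (Ideal.span {(X : R[X]) ^ n - 1})
          (C γ * (g.reverse * f.reverse))} ↔
      (∃ ε : Rˣ, f = C (ε : R) * g.reverse) ∧ (∃ ε' : Rˣ, h = C (ε' : R) * h.reverse) :=
  stmt11_general R γ hγ hγ2 hγ1 n hcop f g h hf hg hh hfgh hgh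
end
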